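/- Let Ω ⊆ ℝⁿ be open, let φ : Ω → ℝ and v : Ω → ℝ both be differentiable with locally Lipschitz gradients (φ, v ∈ C^{1,1}_loc(Ω)), with v ≥ 0 on Ω, and assume Δ(v + φ)(x) = 0 for almost every x ∈ {v > 0}. Then v satisfies Δv = (−Δφ) χ_{{v>0}} almost everywhere in Ω: for a.e. x ∈ Ω, Δv(x) = −Δφ(x) if v(x) > 0 and Δv(x) = 0 if v(x) = 0. -/

import Mathlib

open MeasureTheory Filter Metric Set
open scoped NNReal ENNReal Topology

noncomputable section

/-- The (pointwise a.e. defined) Laplacian of a `C^{1,1}_loc` function, as the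
trace of the derivative of the gradient. -/
def lapGrad {n : ℕ} (w : EuclideanSpace ℝ (Fin n) → ℝ)
    (x : EuclideanSpace ℝ (Fin n)) : ℝ :=
  ∑ i : Fin n, fderiv ℝ (gradient w) x (EuclideanSpace.single i 1) i

/-!
By Rademacher's theorem the gradients of `v` and `φ` are differentiable a.e. in `Ω`.
On the open set `{v > 0}` the Laplacian is additive, so `Δv = -Δφ` there.
On `{v = 0}` the function `v ≥ 0` attains a local minimum, so `∇v` vanishes on that set;
a map that is constant on a measurable set has zero derivative at almost every point of it
where it is differentiable (at a Lebesgue density point, difference quotients taken along the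
set already determine the derivative), so `Δv = 0` a.e. on `{v = 0}`.
-/

section AddHaar

variable {E F : Type*} [NormedAddCommGroup E] [NormedSpace ℝ E] [FiniteDimensional ℝ E]
  [MeasurableSpace E] [BorelSpace E] [NormedAddCommGroup F] [NormedSpace ℝ F]
  (μ : Measure E) [μ.IsAddHaarMeasure]

theorem ae_differentiableAt_of_forall_isCompact_lipschitzOnWith [FiniteDimensional ℝ F]
    {f : E → F} {U : Set E} (hU : IsOpen U)
    (hf : ∀ K ⊆ U, IsCompact K → ∃ L : ℝ≥0, LipschitzOnWith L f K) :
    ∀ᵐ x ∂μ, x ∈ U → DifferentiableAt ℝ f x := by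
  refine ae_iff.2 (measure_null_of_locally_null _ fun x hx => ?_)
  obtain ⟨r, hr, hrU⟩ :=
    nhds_basis_closedBall.mem_iff.1 (hU.mem_nhds (Classical.not_imp.1 hx).1)
  obtain ⟨L, hL⟩ := hf _ hrU (isCompact_closedBall x r)
  have hLdiff := ae_iff.1 (hL.ae_differentiableWithinAt_of_mem (μ := μ))
  refine ⟨_, inter_mem_nhdsWithin _ (ball_mem_nhds x hr),
    measure_mono_null (fun y hy => show ¬_ from fun h => ?_) hLdiff⟩
  exact hy.1 fun _ => (h (ball_subset_closedBall hy.2)).differentiableAt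
    (closedBall_mem_nhds_of_mem hy.2)

theorem ae_fderiv_eq_zero_of_eqOn_const {g : E → E} {s : Set E} {c : E} (hs : MeasurableSet s)
    (hg : EqOn g (fun _ => c) s) :
    ∀ᵐ x ∂μ, x ∈ s → DifferentiableAt ℝ g x → fderiv ℝ g x = 0 := by
  set t := s ∩ {x | DifferentiableAt ℝ g x}
  have ht : MeasurableSet t := hs.inter (measurableSet_of_differentiableAt ℝ g)
  have happrox : ApproximatesLinearOn g (0 : E →L[ℝ] E) t 0 := fun x hx y hy => by
    simp [hg hx.1, hg hy.1]
  have hnorm := happrox.norm_fderiv_sub_le μ ht (fderiv ℝ g) fun x hx =>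
    hx.2.hasFDerivAt.hasFDerivWithinAt
  filter_upwards [(ae_restrict_iff' ht).1 hnorm] with x hx hxs hdiff
  simpa using hx ⟨hxs, hdiff⟩

end AddHaar

section Gradient

variable {F : Type*} [NormedAddCommGroup F] [InnerProductSpace ℝ F] [CompleteSpace F]
  {f g : F → ℝ} {x : F}

theorem gradient_fun_add (hf : DifferentiableAt ℝ f x) (hg : DifferentiableAt ℝ g x) :
    gradient (fun y => f y + g y) x = gradient f x + gradient g x := by
  simp only [gradient, fderiv_fun_add hf hg, map_add]

theorem IsLocalMin.gradient_eq_zero (h : IsLocalMin f x) : gradient f x = 0 := by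
  simp only [gradient, h.fderiv_eq_zero, map_zero]

end Gradient

theorem lapGrad_add {n : ℕ} {f g : EuclideanSpace ℝ (Fin n) → ℝ}
    {x : EuclideanSpace ℝ (Fin n)}
    (hf : ∀ᶠ y in 𝓝 x, DifferentiableAt ℝ f y) (hg : ∀ᶠ y in 𝓝 x, DifferentiableAt ℝ g y)
    (hf' : DifferentiableAt ℝ (gradient f) x) (hg' : DifferentiableAt ℝ (gradient g) x) :
    lapGrad (fun y => f y + g y) x = lapGrad f x + lapGrad g x := by
  have hgrad : gradient (fun y => f y + g y) =ᶠ[𝓝 x] fun y => gradient f y + gradient g y := by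
    filter_upwards [hf, hg] with y hfy hgy using gradient_fun_add hfy hgy
  simp only [lapGrad, hgrad.fderiv_eq, fderiv_fun_add hf' hg', add_apply,
    PiLp.add_apply, Finset.sum_add_distrib]

/-- if `φ, v ∈ C^{1,1}_loc(Ω)` with `v ≥ 0` on `Ω` and
`Δ(v + φ) = 0` a.e. on `{v > 0}`, then `Δv = (-Δφ) χ_{{v>0}}` a.e. in `Ω`:
for a.e. `x ∈ Ω`, `Δv(x) = -Δφ(x)` where `v(x) > 0`, and `Δv(x) = 0` where
`v(x) = 0`. -/
theorem laplacian_is_characteristic_function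
    {n : ℕ} (Ω : Set (EuclideanSpace ℝ (Fin n))) (hΩopen : IsOpen Ω)
    (φ v : EuclideanSpace ℝ (Fin n) → ℝ)
    (hφdiff : ∀ x ∈ Ω, DifferentiableAt ℝ φ x)
    (hφlip : ∀ K : Set (EuclideanSpace ℝ (Fin n)), K ⊆ Ω → IsCompact K →
      ∃ L : ℝ≥0, LipschitzOnWith L (gradient φ) K)
    (hvdiff : ∀ x ∈ Ω, DifferentiableAt ℝ v x)
    (hvlip : ∀ K : Set (EuclideanSpace ℝ (Fin n)), K ⊆ Ω → IsCompact K →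
      ∃ L : ℝ≥0, LipschitzOnWith L (gradient v) K)
    (hvnonneg : ∀ x ∈ Ω, 0 ≤ v x)
    (hharm : ∀ᵐ x ∂(volume.restrict {x ∈ Ω | 0 < v x}),
      lapGrad (fun y => v y + φ y) x = 0) :
    ∀ᵐ x ∂(volume.restrict Ω),
      (0 < v x → lapGrad v x = -lapGrad φ x) ∧
      (v x = 0 → lapGrad v x = 0) := by
  have hpos : IsOpen {x ∈ Ω | 0 < v x} :=
    ContinuousOn.isOpen_inter_preimage (fun x hx => (hvdiff x hx).continuousAt.continuousWithinAt)
      hΩopen isOpen_Ioi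
  have hzero : EqOn (gradient v) (fun _ => 0) (Ω \ {x ∈ Ω | 0 < v x}) := fun x hx =>
    IsLocalMin.gradient_eq_zero <| by
      filter_upwards [hΩopen.mem_nhds hx.1] with y hy
      exact (not_lt.1 fun h => hx.2 ⟨hx.1, h⟩).trans (hvnonneg y hy)
  rw [ae_restrict_iff' hpos.measurableSet] at hharm
  rw [ae_restrict_iff' hΩopen.measurableSet]
  filter_upwards [ae_differentiableAt_of_forall_isCompact_lipschitzOnWith volume hΩopen hvlip,
    ae_differentiableAt_of_forall_isCompact_lipschitzOnWith volume hΩopen hφlip, hharm,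
    ae_fderiv_eq_zero_of_eqOn_const volume (hΩopen.measurableSet.diff hpos.measurableSet) hzero]
    with x hDv hDφ hharmx hD2v hx
  refine ⟨fun hvx => ?_, fun hvx => ?_⟩
  · have hsplit := lapGrad_add (eventually_of_mem (hΩopen.mem_nhds hx) hvdiff)
      (eventually_of_mem (hΩopen.mem_nhds hx) hφdiff) (hDv hx) (hDφ hx)
    linarith [hharmx ⟨hx, hvx⟩]
  · simp [lapGrad, hD2v ⟨hx, fun h => h.2.ne' hvx⟩ (hDv hx)]
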